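/- Let G be a finite abelian group of order n and k an integer with 4 ≤ k ≤ ⌊n/2⌋ + 1. For every b ∈ G, |N(k, b) − C(n, k)/n| ≤ k · C(⌊n/2⌋, ⌊k/2⌋), where N(k, b) is the number of k-subsets of G summing to b. -/

import Mathlib

/-!
Counting with characters, `n · N(k, b) = ∑_ψ ψ(-b) e_k(ψ)`, where `e_k(ψ)` is the `k`-th
elementary symmetric function of the values of `ψ`; the trivial character contributes `C(n, k)`.
If `ψ` is nontrivial with an image of `d ≥ 2` elements, its fibres are cosets of its kernel (of
size `m = n / d`) and its values are `d`-th roots of unity, so `∏_g (X - ψ g) = (X ^ d - 1) ^ m`.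
Hence `|e_k(ψ)|` is `C(m, k / d)` if `d ∣ k` and `0` otherwise, which is at most
`C(⌊n/2⌋, ⌊k/2⌋)`.
-/

open Finset Polynomial

theorem Nat.choose_le_choose_of_le_of_two_mul_le {N r s : ℕ} (hrs : r ≤ s)
    (hs : 2 * s ≤ N + 1) : N.choose r ≤ N.choose s := by
  induction s, hrs using Nat.le_induction with
  | base => rfl
  | succ s _ ih =>
    refine (ih (by omega)).trans ?_
    rcases Nat.lt_or_ge s (N / 2) with h | h
    · exact Nat.choose_le_succ_of_lt_half_left h
    · obtain rfl : N = 2 * s + 1 := by omega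
      exact (Nat.choose_symm_half s).ge

theorem Nat.choose_div_le_choose_div_two {n k d : ℕ} (hd : 2 ≤ d) (hk : k ≤ n / 2 + 1) :
    (n / d).choose (k / d) ≤ (n / 2).choose (k / 2) :=
  calc (n / d).choose (k / d) ≤ (n / 2).choose (k / d) :=
        Nat.choose_le_choose _ (Nat.div_le_div_left hd two_pos)
    _ ≤ (n / 2).choose (k / 2) :=
        Nat.choose_le_choose_of_le_of_two_mul_le (Nat.div_le_div_left hd two_pos) (by omega)

theorem Finset.prod_X_sub_C_eq_X_pow_card_sub_one {R : Type*} [CommRing R] [IsDomain R]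
    (U : Finset R) (hU : U.Nonempty) (hpow : ∀ z ∈ U, z ^ #U = 1) :
    ∏ z ∈ U, (X - C z) = X ^ #U - 1 := by
  have hmonic : (X ^ #U - C 1 : R[X]).Monic := monic_X_pow_sub_C 1 hU.card_pos.ne'
  have hroots : U.val = (X ^ #U - C 1 : R[X]).roots := by
    refine Multiset.eq_of_le_of_card_le ((Multiset.le_iff_subset U.nodup).2 fun z hz => ?_) ?_
    · rw [← nthRoots, mem_nthRoots hU.card_pos]
      exact hpow z hz
    · exact card_nthRoots _ _
  rw [← C_1, ← prod_multiset_X_sub_C_of_monic_of_roots_card_eq hmonic, ← hroots]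
  · rfl
  · rw [← hroots, natDegree_X_pow_sub_C]; rfl

theorem Polynomial.coeff_X_pow_sub_one_pow {R : Type*} [CommRing R] {d : ℕ} (hd : 0 < d)
    (m j : ℕ) : ((X ^ d - 1 : R[X]) ^ m).coeff j =
      if d ∣ j then (-1) ^ (m - j / d) * (m.choose (j / d) : R) else 0 := by
  have : (X ^ d - 1 : R[X]) ^ m = expand R d ((X + C (-1)) ^ m) := by
    simp [sub_eq_add_neg]
  rw [this, coeff_expand hd, coeff_X_add_C_pow]

theorem Polynomial.norm_coeff_X_pow_sub_one_pow_le {R : Type*} [NormedField R] {d : ℕ}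
    (hd : 0 < d) (m j : ℕ) :
    ‖((X ^ d - 1 : R[X]) ^ m).coeff j‖ ≤ if d ∣ j then (m.choose (j / d) : ℝ) else 0 := by
  rw [coeff_X_pow_sub_one_pow hd]
  split_ifs
  · rw [norm_mul, norm_pow, norm_neg, norm_one, one_pow, one_mul]
    simpa using Nat.norm_cast_le (α := R) _
  · simp

theorem Finset.coeff_prod_X_sub_C_card_sub {ι R : Type*} [CommRing R] (s : Finset ι) (f : ι → R)
    {k : ℕ} (hk : k ≤ #s) :
    (∏ i ∈ s, (X - C (f i))).coeff (#s - k) =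
      (-1) ^ k * ∑ t ∈ s.powersetCard k, ∏ i ∈ t, f i := by
  simp_rw [sub_eq_add_neg, ← C_neg]
  rw [Finset.prod_X_add_C_coeff s (fun i => -f i) (Nat.sub_le _ _), Nat.sub_sub_self hk, mul_sum]
  refine sum_congr rfl fun t ht => ?_
  rw [prod_neg, (mem_powersetCard.1 ht).2]

theorem AddChar.map_sum_eq_prod {ι A M : Type*} [AddCommMonoid A] [CommMonoid M]
    (ψ : AddChar A M) (s : Finset ι) (f : ι → A) :
    ψ (∑ i ∈ s, f i) = ∏ i ∈ s, ψ (f i) := by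
  induction s using Finset.cons_induction with
  | empty => simp
  | cons a s _ ih => rw [sum_cons, prod_cons, map_add_eq_mul, ih]

namespace AddChar

variable {G R : Type*} [AddGroup G] [Fintype G] [CommRing R] [DecidableEq R] (ψ : AddChar G R)

theorem two_le_card_image (hψ : ψ ≠ 0) : 2 ≤ #(univ.image ψ) := by
  obtain ⟨g, hg⟩ := ne_zero_iff.1 hψ
  exact one_lt_card.2 ⟨ψ g, mem_image_of_mem _ (mem_univ g), ψ 0, mem_image_of_mem _ (mem_univ 0),
    by rwa [map_zero_eq_one]⟩

variable [IsDomain R]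

theorem card_fiber_eq_card_ker {z : R} (hz : z ∈ univ.image ψ) :
    #{g | ψ g = z} = #{g | ψ g = 1} := by
  obtain ⟨g₀, -, rfl⟩ := mem_image.1 hz
  have hshift (g : G) : ψ (g₀ + g) = ψ g₀ ↔ ψ g = 1 := by
    rw [map_add_eq_mul, mul_eq_left₀ (ψ.val_isUnit g₀).ne_zero]
  refine card_nbij' (-g₀ + ·) (g₀ + ·) (fun g hg => ?_) (fun g hg => ?_)
    (fun g _ => add_neg_cancel_left g₀ g) (fun g _ => neg_add_cancel_left g₀ g)
  · simp only [coe_filter, mem_univ, true_and, Set.mem_ofPred_eq] at hg ⊢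
    rwa [← hshift, add_neg_cancel_left]
  · simp only [coe_filter, mem_univ, true_and, Set.mem_ofPred_eq] at hg ⊢
    rwa [hshift]

theorem card_eq_card_image_mul_card_ker :
    Fintype.card G = #(univ.image ψ) * #{g | ψ g = 1} := by
  rw [← card_univ, card_eq_sum_card_image ψ,
    sum_congr rfl fun z hz => ψ.card_fiber_eq_card_ker hz, sum_const, smul_eq_mul]

theorem pow_card_image_eq_one (g : G) : ψ g ^ #(univ.image ψ) = 1 := by
  set U := univ.image ψ
  -- Multiplication by `ψ g` permutes `U`, hence fixes the (nonzero) product of its elements.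
  have hshift : U.image (ψ g * ·) = U := by
    ext z
    simp only [U, mem_image, mem_univ, true_and, exists_exists_eq_and, ← map_add_eq_mul]
    exact ⟨fun ⟨h, hh⟩ => ⟨g + h, hh⟩, fun ⟨h, hh⟩ => ⟨-g + h, by rwa [add_neg_cancel_left]⟩⟩
  have hprod : ∏ z ∈ U, z ≠ 0 :=
    prod_ne_zero_iff.2 <| by simpa [U] using fun h => (ψ.val_isUnit h).ne_zero
  refine (mul_eq_right₀ hprod).1 ?_
  calc ψ g ^ #U * ∏ z ∈ U, z = ∏ z ∈ U, ψ g * z := by rw [prod_mul_distrib, prod_const]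
    _ = ∏ z ∈ U.image (ψ g * ·), z :=
      (prod_image (f := id) fun x _ y _ h => mul_left_cancel₀ (ψ.val_isUnit g).ne_zero h).symm
    _ = ∏ z ∈ U, z := by rw [hshift]

theorem prod_X_sub_C_eq_X_pow_sub_one_pow :
    ∏ g, (X - C (ψ g)) = (X ^ #(univ.image ψ) - 1) ^ #{g | ψ g = 1} := by
  rw [prod_comp (fun z => X - C z) ψ,
    prod_congr rfl fun z hz => by rw [ψ.card_fiber_eq_card_ker hz], prod_pow,
    prod_X_sub_C_eq_X_pow_card_sub_one _ (univ_nonempty.image ψ)]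
  simpa using ψ.pow_card_image_eq_one

end AddChar

theorem AddChar.norm_sum_powersetCard_prod_le {G : Type*} [AddGroup G] [Fintype G]
    (ψ : AddChar G ℂ) (hψ : ψ ≠ 0) {k : ℕ} (hk : k ≤ Fintype.card G / 2 + 1) :
    ‖∑ S ∈ univ.powersetCard k, ∏ g ∈ S, ψ g‖ ≤ (Fintype.card G / 2).choose (k / 2) := by
  classical
  set n := Fintype.card G
  set d := #(univ.image ψ)
  set m := #{g | ψ g = 1}
  have hd : 2 ≤ d := ψ.two_le_card_image hψ
  have hn : n = d * m := ψ.card_eq_card_image_mul_card_ker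
  have hkn : k ≤ n := by
    have : d ≤ n := card_image_le
    omega
  have hcoeff : ‖∑ S ∈ univ.powersetCard k, ∏ g ∈ S, ψ g‖ =
      ‖((X ^ d - 1 : ℂ[X]) ^ m).coeff (n - k)‖ := by
    have h := coeff_prod_X_sub_C_card_sub (univ : Finset G) ψ (k := k) (by rwa [card_univ])
    rw [card_univ, ψ.prod_X_sub_C_eq_X_pow_sub_one_pow] at h
    rw [h, norm_mul, norm_pow, norm_neg, norm_one, one_pow, one_mul]
  refine hcoeff ▸ (norm_coeff_X_pow_sub_one_pow_le (by omega) m (n - k)).trans ?_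
  split_ifs with hdvd
  · obtain ⟨j, hj⟩ := hdvd
    have hd0 : 0 < d := by omega
    have hjm : j ≤ m := Nat.le_of_mul_le_mul_left (by rw [← hj, ← hn]; exact Nat.sub_le n k) hd0
    have hk' : k = d * (m - j) := by rw [Nat.mul_sub, ← hj, ← hn]; omega
    calc (m.choose ((n - k) / d) : ℝ) = (n / d).choose (k / d) := by
          rw [hj, hk', hn, Nat.mul_div_cancel_left _ hd0, Nat.mul_div_cancel_left _ hd0,
            Nat.mul_div_cancel_left _ hd0, Nat.choose_symm hjm]
      _ ≤ (n / 2).choose (k / 2) := by exact_mod_cast Nat.choose_div_le_choose_div_two hd hk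
  · positivity

namespace AddChar

variable {ι G : Type*} [AddCommGroup G] [Fintype G] [DecidableEq G] (s : Finset ι) (f : ι → G)
  (b : G)

theorem card_mul_card_filter_eq_sum :
    (Fintype.card G : ℂ) * #{i ∈ s | f i = b} =
      ∑ ψ : AddChar G ℂ, ψ (-b) * ∑ i ∈ s, ψ (f i) := by
  simp_rw [mul_sum, ← map_add_eq_mul]
  rw [sum_comm]
  simp_rw [neg_add_eq_sub, sum_apply_eq_ite, sub_eq_zero, sum_ite, sum_const_zero, add_zero,
    sum_const, nsmul_eq_mul, mul_comm]

theorem abs_card_filter_sub_le {B : ℝ} (hB₀ : 0 ≤ B)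
    (hB : ∀ ψ : AddChar G ℂ, ψ ≠ 0 → ‖∑ i ∈ s, ψ (f i)‖ ≤ B) :
    |(#{i ∈ s | f i = b} : ℝ) - #s / Fintype.card G| ≤ B := by
  set n := Fintype.card G
  set N := #{i ∈ s | f i = b}
  have hn : (0 : ℝ) < n := by exact_mod_cast Fintype.card_pos
  have herr : (n : ℂ) * N - #s =
      ∑ ψ ∈ (univ : Finset (AddChar G ℂ)).erase 0, ψ (-b) * ∑ i ∈ s, ψ (f i) := by
    rw [card_mul_card_filter_eq_sum, ← add_sum_erase _ _ (mem_univ 0)]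
    simp
  have hnorm : ‖(n : ℂ) * N - #s‖ ≤ n * B := by
    rw [herr]
    calc _ ≤ ∑ ψ ∈ (univ : Finset (AddChar G ℂ)).erase 0, B := by
          refine (norm_sum_le _ _).trans (sum_le_sum fun ψ hψ => ?_)
          rw [norm_mul, norm_apply, one_mul]
          exact hB ψ (ne_of_mem_erase hψ)
      _ ≤ n * B := by
          rw [sum_const, nsmul_eq_mul]
          gcongr
          exact_mod_cast card_erase_le.trans_eq (card_univ.trans card_eq)
  have habs : ‖(n : ℂ) * N - #s‖ = n * |(N : ℝ) - #s / n| := by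
    have hreal : (n : ℂ) * N - #s = ((n * ((N : ℝ) - #s / n) : ℝ) : ℂ) := by
      rw [mul_sub, mul_div_cancel₀ _ hn.ne']
      push_cast
      rfl
    rw [hreal, Complex.norm_real, Real.norm_eq_abs, abs_mul, abs_of_pos hn]
  exact le_of_mul_le_mul_left (habs ▸ hnorm) hn

end AddChar

theorem stmt_12 (G : Type) [AddCommGroup G] [Fintype G] [DecidableEq G]
    (n k : ℕ) (hn : n = Fintype.card G) (hk4 : 4 ≤ k) (hk : k ≤ n / 2 + 1) (b : G) :
    |((((Finset.univ.powersetCard k).filter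
          (fun S : Finset G => S.sum id = b)).card : ℝ)) -
        (n.choose k : ℝ) / (n : ℝ)| ≤
      (k : ℝ) * ((n / 2).choose (k / 2) : ℝ) := by
  subst hn
  have hdev := AddChar.abs_card_filter_sub_le (univ.powersetCard k) (fun S => S.sum id) b
    (B := ((Fintype.card G / 2).choose (k / 2) : ℝ)) (by positivity) fun ψ hψ => by
      simpa only [AddChar.map_sum_eq_prod, id] using ψ.norm_sum_powersetCard_prod_le hψ hk
  rw [card_powersetCard, card_univ] at hdev
  have hk1 : (1 : ℝ) ≤ k := by exact_mod_cast (by omega : 1 ≤ k)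
  exact hdev.trans (le_mul_of_one_le_left (by positivity) hk1)
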